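/- arXiv:1001.2864 — 3 statements merged into one kernel-verified Lean document; each statement's English description precedes it below -/
import Mathlib

section
/- Let ε₁, ε₂, ε₃ > 0. Then there exist δ > 0 and ε > 0 such that the following holds: for every finite set U and all probability distributions p, q, r, s on U satisfying (i) d(p,q) ≥ ε₁, (ii) p(u) ≥ ε₂ and q(u) ≥ ε₃ for all u ∈ U, and (iii) d(p,r) < δ and d(p,s) < δ, one has ∑_{u ∈ U} r(u)·log(s(u)/q(u)) ≥ ε. -/
open Real Finset

/-!
Write `KL(p‖q) = ∑ p log (p / q)`. For positive `p, q, s` one has the exact identity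
`∑ r log (s / q) = KL(p‖q) - KL(p‖s) + ∑ (r - p) log (s / q)`.
Since `p ≥ ε₂` and `d(p,s) < δ ≤ ε₂ / 2`, `s` is bounded below by `ε₂ / 2`; together with
`q ≥ ε₃` this bounds `|log (s / q)|`, so the last two terms are `O(δ)`.
The main term is bounded below by a Pinsker-type inequality `KL(p‖q) ≥ d(p,q)² / 4 ≥ ε₁² / 4`,
which follows from `a log (a / b) ≥ a - b + (√a - √b)²` and Cauchy–Schwarz applied to
`|a - b| = (√a + √b) |√a - √b|`.
-/

lemma sub_add_sq_sqrt_sub_le_mul_log_div {a b : ℝ} (ha : 0 ≤ a) (hb : 0 < b) :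
    a - b + (√a - √b) ^ 2 ≤ a * log (a / b) := by
  rcases ha.eq_or_lt with rfl | ha
  · simp [sq_sqrt hb.le]
  have hsa := Real.sqrt_pos.2 ha
  have hsb := Real.sqrt_pos.2 hb
  have hlog : log (a / b) = -2 * log (√b / √a) := by
    rw [log_div ha.ne' hb.ne', log_div hsb.ne' hsa.ne', log_sqrt ha.le, log_sqrt hb.le]; ring
  have hmul : a * (√b / √a) = √a * √b := by
    rw [mul_div_assoc', div_eq_iff hsa.ne']
    linear_combination √b * (mul_self_sqrt ha.le).symm
  -- `log (b / a) = 2 log (√b / √a) ≤ 2 (√b / √a - 1)`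
  have key := mul_le_mul_of_nonneg_left (log_le_sub_one_of_pos (div_pos hsb hsa)) ha.le
  rw [hlog]
  nlinarith [sq_sqrt ha.le, sq_sqrt hb.le]

lemma sq_sum_abs_sub_le_mul_sum_sq_sqrt_sub {ι : Type*} (s : Finset ι) {f g : ι → ℝ}
    (hf : ∀ i ∈ s, 0 ≤ f i) (hg : ∀ i ∈ s, 0 ≤ g i) :
    (∑ i ∈ s, |f i - g i|) ^ 2 ≤ 2 * (∑ i ∈ s, (f i + g i)) * ∑ i ∈ s, (√(f i) - √(g i)) ^ 2 := by
  have hfactor : ∀ i ∈ s, |f i - g i| = (√(f i) + √(g i)) * |√(f i) - √(g i)| := by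
    intro i hi
    have hdiff : f i - g i = (√(f i) + √(g i)) * (√(f i) - √(g i)) := by
      linear_combination (sq_sqrt (hf i hi)).symm - (sq_sqrt (hg i hi)).symm
    rw [hdiff, abs_mul, abs_of_nonneg (by positivity)]
  have hsq : ∀ i ∈ s, (√(f i) + √(g i)) ^ 2 ≤ 2 * (f i + g i) := fun i hi => by
    nlinarith [sq_sqrt (hf i hi), sq_sqrt (hg i hi), sq_nonneg (√(f i) - √(g i))]
  calc (∑ i ∈ s, |f i - g i|) ^ 2
      = (∑ i ∈ s, (√(f i) + √(g i)) * |√(f i) - √(g i)|) ^ 2 := by rw [sum_congr rfl hfactor]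
    _ ≤ (∑ i ∈ s, (√(f i) + √(g i)) ^ 2) * ∑ i ∈ s, |√(f i) - √(g i)| ^ 2 :=
      sum_mul_sq_le_sq_mul_sq s _ _
    _ ≤ (∑ i ∈ s, 2 * (f i + g i)) * ∑ i ∈ s, (√(f i) - √(g i)) ^ 2 := by
      simp only [sq_abs]
      gcongr with i hi
      exact hsq i hi
    _ = 2 * (∑ i ∈ s, (f i + g i)) * ∑ i ∈ s, (√(f i) - √(g i)) ^ 2 := by rw [← mul_sum]

lemma sq_sum_abs_sub_div_four_le_sum_mul_log_div {ι : Type*} (s : Finset ι) {p q : ι → ℝ}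
    (hp : ∀ i ∈ s, 0 ≤ p i) (hq : ∀ i ∈ s, 0 < q i)
    (hp1 : ∑ i ∈ s, p i = 1) (hq1 : ∑ i ∈ s, q i = 1) :
    (∑ i ∈ s, |p i - q i|) ^ 2 / 4 ≤ ∑ i ∈ s, p i * log (p i / q i) := by
  have hcs := sq_sum_abs_sub_le_mul_sum_sq_sqrt_sub s hp fun i hi => (hq i hi).le
  have hpointwise := sum_le_sum fun i hi =>
    sub_add_sq_sqrt_sub_le_mul_log_div (hp i hi) (hq i hi)
  rw [sum_add_distrib, sum_sub_distrib, hp1, hq1] at hpointwise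
  rw [sum_add_distrib, hp1, hq1] at hcs
  linarith

lemma mul_log_div_le_abs_sub_div {a b c : ℝ} (ha : 0 ≤ a) (ha1 : a ≤ 1) (hc : 0 < c)
    (hcb : c ≤ b) : a * log (a / b) ≤ |a - b| / c := by
  rcases ha.eq_or_lt with rfl | ha
  · simp only [zero_div, log_zero, mul_zero, zero_sub, abs_neg]
    positivity
  have hb := hc.trans_le hcb
  calc a * log (a / b) ≤ a * ((a - b) / b) := by
        gcongr
        rw [sub_div, div_self hb.ne']
        exact log_le_sub_one_of_pos (div_pos ha hb)
    _ ≤ a * (|a - b| / b) := by gcongr; exact le_abs_self _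
    _ ≤ |a - b| / b := mul_le_of_le_one_left (by positivity) ha1
    _ ≤ |a - b| / c := by gcongr

lemma abs_log_le_neg_log {c x : ℝ} (hc : 0 < c) (hcx : c ≤ x) (hx1 : x ≤ 1) :
    |log x| ≤ -log c := by
  rw [abs_of_nonpos (log_nonpos (hc.le.trans hcx) hx1), neg_le_neg_iff]
  exact log_le_log hc hcx

lemma abs_sum_mul_le {ι : Type*} (s : Finset ι) (f g : ι → ℝ) {M : ℝ}
    (hg : ∀ i ∈ s, |g i| ≤ M) : |∑ i ∈ s, f i * g i| ≤ M * ∑ i ∈ s, |f i| := by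
  calc |∑ i ∈ s, f i * g i| ≤ ∑ i ∈ s, |f i| * M := by
        refine (abs_sum_le_sum_abs _ _).trans (sum_le_sum fun i hi => ?_)
        rw [abs_mul]
        exact mul_le_mul_of_nonneg_left (hg i hi) (abs_nonneg _)
    _ = M * ∑ i ∈ s, |f i| := by rw [mul_sum]; simp only [mul_comm]

lemma sum_mul_log_div_sub_le_sum_mul_log_div {U : Type*} [Fintype U] {p q r s : U → ℝ}
    {c M : ℝ} (hc : 0 < c) (hp : ∀ u, 0 < p u) (hp1 : ∀ u, p u ≤ 1) (hq : ∀ u, 0 < q u)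
    (hs : ∀ u, c ≤ s u) (hM : ∀ u, |log (s u / q u)| ≤ M) :
    ∑ u, p u * log (p u / q u) - (M * ∑ u, |p u - r u| + (∑ u, |p u - s u|) / c)
      ≤ ∑ u, r u * log (s u / q u) := by
  have hdecomp : ∑ u, r u * log (s u / q u) = ∑ u, p u * log (p u / q u)
      - ∑ u, p u * log (p u / s u) + ∑ u, (r u - p u) * log (s u / q u) := by
    rw [← sum_sub_distrib, ← sum_add_distrib]
    refine sum_congr rfl fun u _ => ?_
    have hsu := hc.trans_le (hs u)
    rw [log_div (hp u).ne' (hq u).ne', log_div (hp u).ne' hsu.ne', log_div hsu.ne' (hq u).ne']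
    ring
  have hdivergence : ∑ u, p u * log (p u / s u) ≤ (∑ u, |p u - s u|) / c := by
    rw [sum_div]
    exact sum_le_sum fun u _ => mul_log_div_le_abs_sub_div (hp u).le (hp1 u) hc (hs u)
  have hcross := abs_sum_mul_le univ (fun u => r u - p u) _ fun u _ => hM u
  simp only [abs_sub_comm (r _)] at hcross
  linarith [neg_abs_le (∑ u, (r u - p u) * log (s u / q u))]

/-- Lemma 1 of the paper: for any ε₁, ε₂, ε₃ > 0 there exist δ > 0 and ε > 0 such that
for every finite set `U` and probability distributions `p, q, r, s` on `U` with
`d(p,q) ≥ ε₁`, `p(u) ≥ ε₂` and `q(u) ≥ ε₃` for all `u`, and `d(p,r) < δ`, `d(p,s) < δ`,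
one has `∑ u, r u * log (s u / q u) ≥ ε`. -/
theorem bayesian_consistency_key_lemma
    (ε₁ ε₂ ε₃ : ℝ) (hε₁ : 0 < ε₁) (hε₂ : 0 < ε₂) (hε₃ : 0 < ε₃) :
    ∃ δ > (0 : ℝ), ∃ ε > (0 : ℝ),
      ∀ (U : Type) [Fintype U] (p q r s : U → ℝ),
        (∀ u, 0 ≤ p u) → (∑ u, p u) = 1 →
        (∀ u, 0 ≤ q u) → (∑ u, q u) = 1 →
        (∀ u, 0 ≤ r u) → (∑ u, r u) = 1 →
        (∀ u, 0 ≤ s u) → (∑ u, s u) = 1 →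
        ε₁ ≤ (∑ u, |p u - q u|) →
        (∀ u, ε₂ ≤ p u) → (∀ u, ε₃ ≤ q u) →
        (∑ u, |p u - r u|) < δ → (∑ u, |p u - s u|) < δ →
        ε ≤ ∑ u, r u * Real.log (s u / q u) := by
  set c := ε₂ / 2 with hc_def
  set M := |log c| + |log ε₃|
  have hc : 0 < c := by positivity
  have hMc : 0 < M + 1 / c := by positivity
  obtain ⟨δ, hδ, hδc, hδM⟩ : ∃ δ > 0, δ ≤ c ∧ (M + 1 / c) * δ ≤ ε₁ ^ 2 / 8 :=
    ⟨min c (ε₁ ^ 2 / (8 * (M + 1 / c))), by positivity, min_le_left _ _, by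
      rw [← le_div_iff₀' hMc, div_div, mul_comm]
      exact min_le_right _ _⟩
  refine ⟨δ, hδ, ε₁ ^ 2 / 8, by positivity, ?_⟩
  intro U _ p q r s hp hp1 hq hq1 _ _ hs hs1 hd hpε hqε hpr hps
  have le_one {f : U → ℝ} (hf : ∀ u, 0 ≤ f u) (hf1 : ∑ u, f u = 1) (u : U) : f u ≤ 1 :=
    hf1 ▸ single_le_sum (fun v _ => hf v) (mem_univ u)
  have hsc (u : U) : c ≤ s u := by
    have := (single_le_sum (fun v _ => abs_nonneg (p v - s v)) (mem_univ u)).trans_lt hps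
    linarith [hpε u, le_abs_self (p u - s u)]
  have hM (u : U) : |log (s u / q u)| ≤ M := by
    rw [log_div (hc.trans_le (hsc u)).ne' (hε₃.trans_le (hqε u)).ne']
    refine (abs_sub _ _).trans (add_le_add ?_ ?_)
    · exact (abs_log_le_neg_log hc (hsc u) (le_one hs hs1 u)).trans (neg_le_abs _)
    · exact (abs_log_le_neg_log hε₃ (hqε u) (le_one hq hq1 u)).trans (neg_le_abs _)
  have hKL : ε₁ ^ 2 / 4 ≤ ∑ u, p u * log (p u / q u) := by
    refine le_trans ?_ (sq_sum_abs_sub_div_four_le_sum_mul_log_div univ (fun u _ => hp u)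
      (fun u _ => hε₃.trans_le (hqε u)) hp1 hq1)
    gcongr
  have herror : M * ∑ u, |p u - r u| + (∑ u, |p u - s u|) / c < ε₁ ^ 2 / 8 := by
    calc M * ∑ u, |p u - r u| + (∑ u, |p u - s u|) / c < M * δ + δ / c :=
        add_lt_add_of_le_of_lt (by gcongr) (by gcongr)
      _ = (M + 1 / c) * δ := by ring
      _ ≤ ε₁ ^ 2 / 8 := hδM
  linarith [sum_mul_log_div_sub_le_sum_mul_log_div (r := r) hc (fun u => hε₂.trans_le (hpε u))
    (le_one hp hp1) (fun u => hε₃.trans_le (hqε u)) hsc hM]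
end

section
/- Let ε₁, ε₂, ε₃ > 0 and let δ > 0 satisfy δ < min(ε₁, ε₂). Define f(δ) := (1/2)(ε₁ − δ)² − 2δ·(|log(ε₂ − δ)| + |log ε₃|). Then for every finite set U and all probability distributions p, q, r, s on U satisfying (i) d(p,q) ≥ ε₁, (ii) p(u) ≥ ε₂ and q(u) ≥ ε₃ for all u ∈ U, and (iii) d(p,r) < δ and d(p,s) < δ, one has ∑_{u ∈ U} r(u)·log(s(u)/q(u)) ≥ f(δ). -/
/-!
The sum splits as `∑ s log (s/q) + ∑ (r - s) log (s/q)`. The first term is a Kullback–Leibler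
divergence, and Pinsker's inequality `‖s - q‖₁² ≤ 2 KL(s‖q)` bounds it below by `½(ε₁ - δ)²`,
since `‖s - q‖₁ ≥ ‖p - q‖₁ - ‖p - s‖₁`. Pinsker follows from Cauchy–Schwarz with the weights
`(2s + 4q)/3`, which sum to `2`, and the pointwise bound `3(t - 1)² ≤ (2t + 4) klFun t`.
The second term is at most `‖r - s‖₁ ≤ 2δ` times `sup |log (s/q)|`, and `s ≥ ε₂ - δ`, `q ≥ ε₃`
bound the logarithms.
-/

open Real Finset InformationTheory

lemma hasDerivAt_add_one_mul_log_sub {x : ℝ} (hx : 0 < x) :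
    HasDerivAt (fun t ↦ (t + 1) * log t - 2 * (t - 1)) (log x + x⁻¹ - 1) x := by
  refine ((((hasDerivAt_id' x).add_const 1).mul (hasDerivAt_log hx.ne')).sub
    (((hasDerivAt_id' x).sub_const 1).const_mul 2)).congr_deriv ?_
  field_simp
  ring

lemma monotoneOn_add_one_mul_log_sub :
    MonotoneOn (fun t ↦ (t + 1) * log t - 2 * (t - 1)) (Set.Ioi 0) := by
  refine monotoneOn_of_hasDerivWithinAt_nonneg (f' := fun x ↦ log x + x⁻¹ - 1) (convex_Ioi 0)
    (fun x hx ↦ (hasDerivAt_add_one_mul_log_sub hx).continuousAt.continuousWithinAt) ?_ ?_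
  · rw [interior_Ioi]
    exact fun x hx ↦ (hasDerivAt_add_one_mul_log_sub hx).hasDerivWithinAt
  · rw [interior_Ioi]
    exact fun x hx ↦ by linarith [one_sub_inv_le_log_of_pos hx]

lemma add_one_mul_log_le_two_mul_sub_one {x : ℝ} (hx₀ : 0 < x) (hx₁ : x ≤ 1) :
    (x + 1) * log x ≤ 2 * (x - 1) := by
  simpa using monotoneOn_add_one_mul_log_sub hx₀ (Set.mem_Ioi.2 one_pos) hx₁

lemma two_mul_sub_one_le_add_one_mul_log {x : ℝ} (hx : 1 ≤ x) :
    2 * (x - 1) ≤ (x + 1) * log x := by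
  simpa using monotoneOn_add_one_mul_log_sub (Set.mem_Ioi.2 one_pos) (one_pos.trans_le hx) hx

lemma hasDerivAt_mul_klFun_sub_sq {x : ℝ} (hx : 0 < x) :
    HasDerivAt (fun t ↦ (2 * t + 4) * klFun t - 3 * (t - 1) ^ 2)
      (4 * ((x + 1) * log x - 2 * (x - 1))) x := by
  refine ((((hasDerivAt_id' x).const_mul 2).add_const 4 |>.mul (hasDerivAt_klFun hx.ne')).sub
    ((((hasDerivAt_id' x).sub_const 1).pow 2).const_mul 3)).congr_deriv ?_
  rw [klFun_apply]
  ring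

lemma three_mul_sq_sub_one_le_mul_klFun {t : ℝ} (ht : 0 ≤ t) :
    3 * (t - 1) ^ 2 ≤ (2 * t + 4) * klFun t := by
  have hcont : Continuous fun t ↦ (2 * t + 4) * klFun t - 3 * (t - 1) ^ 2 := by
    have := continuous_klFun
    fun_prop
  have hmin : IsMinOn (fun t ↦ (2 * t + 4) * klFun t - 3 * (t - 1) ^ 2) (Set.Ici 0) 1 := by
    refine isMinOn_Ici_of_deriv hcont.continuousAt hcont.continuousAt
      (fun x hx ↦ (hasDerivAt_mul_klFun_sub_sq hx.1).differentiableAt.differentiableWithinAt)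
      (fun x hx ↦ (hasDerivAt_mul_klFun_sub_sq (one_pos.trans hx)).differentiableAt
        |>.differentiableWithinAt) (fun x hx ↦ ?_) (fun x hx ↦ ?_)
    · rw [(hasDerivAt_mul_klFun_sub_sq hx.1).deriv]
      linarith [add_one_mul_log_le_two_mul_sub_one hx.1 hx.2.le]
    · rw [(hasDerivAt_mul_klFun_sub_sq (one_pos.trans hx)).deriv]
      linarith [two_mul_sub_one_le_add_one_mul_log (le_of_lt hx)]
  simpa [klFun_one] using hmin ht

lemma mul_klFun_div {x y : ℝ} (hy : 0 < y) : y * klFun (x / y) = x * log (x / y) + y - x := by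
  rw [klFun_apply]
  field_simp

lemma three_mul_sq_sub_le_mul_klFun_div {x y : ℝ} (hx : 0 ≤ x) (hy : 0 < y) :
    3 * (x - y) ^ 2 ≤ (2 * x + 4 * y) * (y * klFun (x / y)) :=
  calc 3 * (x - y) ^ 2 = 3 * (x / y - 1) ^ 2 * y ^ 2 := by field_simp
    _ ≤ (2 * (x / y) + 4) * klFun (x / y) * y ^ 2 :=
      mul_le_mul_of_nonneg_right (three_mul_sq_sub_one_le_mul_klFun (div_nonneg hx hy.le))
        (sq_nonneg y)
    _ = (2 * x + 4 * y) * (y * klFun (x / y)) := by field_simp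

lemma abs_log_le_abs_log_of_le {a x : ℝ} (ha : 0 < a) (hax : a ≤ x) (hx : x ≤ 1) :
    |log x| ≤ |log a| := by
  rw [abs_of_nonpos (log_nonpos (ha.le.trans hax) hx),
    abs_of_nonpos (log_nonpos ha.le (hax.trans hx))]
  exact neg_le_neg (log_le_log ha hax)

lemma abs_log_div_le {a b x y : ℝ} (ha : 0 < a) (hb : 0 < b) (hax : a ≤ x) (hx : x ≤ 1)
    (hby : b ≤ y) (hy : y ≤ 1) : |log (x / y)| ≤ |log a| + |log b| := by
  rw [log_div (ha.trans_le hax).ne' (hb.trans_le hby).ne']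
  exact (abs_sub _ _).trans
    (add_le_add (abs_log_le_abs_log_of_le ha hax hx) (abs_log_le_abs_log_of_le hb hby hy))

section FiniteSums

variable {U : Type*} [Fintype U]

lemma le_one_of_sum_eq_one {a : U → ℝ} (ha : ∀ u, 0 ≤ a u) (h : ∑ u, a u = 1) (u : U) :
    a u ≤ 1 :=
  h ▸ single_le_sum (fun v _ ↦ ha v) (mem_univ u)

lemma abs_sub_le_sum_abs_sub (a b : U → ℝ) (u : U) : |a u - b u| ≤ ∑ v, |a v - b v| :=
  single_le_sum (f := fun v ↦ |a v - b v|) (fun _ _ ↦ abs_nonneg _) (mem_univ u)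

lemma sum_abs_sub_comm (a b : U → ℝ) : ∑ u, |a u - b u| = ∑ u, |b u - a u| :=
  sum_congr rfl fun _ _ ↦ abs_sub_comm _ _

lemma sum_abs_sub_le_add (a b c : U → ℝ) :
    ∑ u, |a u - c u| ≤ ∑ u, |a u - b u| + ∑ u, |b u - c u| := by
  rw [← sum_add_distrib]
  exact sum_le_sum fun u _ ↦ abs_sub_le _ _ _

lemma abs_sum_mul_sub_sum_mul_le {a b L : U → ℝ} {M : ℝ} (hL : ∀ u, |L u| ≤ M) :
    |∑ u, a u * L u - ∑ u, b u * L u| ≤ (∑ u, |a u - b u|) * M := by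
  rw [← sum_sub_distrib, sum_mul]
  refine (abs_sum_le_sum_abs _ _).trans (sum_le_sum fun u _ ↦ ?_)
  rw [← sub_mul, abs_mul]
  exact mul_le_mul_of_nonneg_left (hL u) (abs_nonneg _)

lemma sum_mul_klFun_div_eq_sum_mul_log_div {s q : U → ℝ} (hq : ∀ u, 0 < q u)
    (hsq : ∑ u, s u = ∑ u, q u) :
    ∑ u, q u * klFun (s u / q u) = ∑ u, s u * log (s u / q u) := by
  simp only [mul_klFun_div (hq _)]
  rw [sum_sub_distrib, sum_add_distrib, hsq, add_sub_cancel_right]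

theorem sq_sum_abs_sub_le_two_mul_sum_mul_log_div {s q : U → ℝ} (hs : ∀ u, 0 ≤ s u)
    (hq : ∀ u, 0 < q u) (hs1 : ∑ u, s u = 1) (hq1 : ∑ u, q u = 1) :
    (∑ u, |s u - q u|) ^ 2 ≤ 2 * ∑ u, s u * log (s u / q u) := by
  set w : U → ℝ := fun u ↦ (2 * s u + 4 * q u) / 3
  have hw : ∀ u, 0 < w u := fun u ↦ by have := hs u; have := hq u; positivity
  have hw_sum : ∑ u, w u = 2 := by
    simp only [w, ← sum_div, sum_add_distrib, ← mul_sum, hs1, hq1]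
    norm_num
  have hterm : ∀ u, |s u - q u| ^ 2 / w u ≤ q u * klFun (s u / q u) := fun u ↦ by
    rw [div_le_iff₀ (hw u), sq_abs]
    dsimp only [w]
    linarith [three_mul_sq_sub_le_mul_klFun_div (hs u) (hq u)]
  have titu := sq_sum_div_le_sum_sq_div univ (fun u ↦ |s u - q u|) (fun u _ ↦ hw u)
  rw [hw_sum, div_le_iff₀ two_pos] at titu
  calc (∑ u, |s u - q u|) ^ 2 ≤ (∑ u, |s u - q u| ^ 2 / w u) * 2 := titu
    _ ≤ (∑ u, q u * klFun (s u / q u)) * 2 := by gcongr with u; exact hterm u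
    _ = 2 * ∑ u, s u * log (s u / q u) := by
      rw [sum_mul_klFun_div_eq_sum_mul_log_div hq (hs1.trans hq1.symm), mul_comm]

end FiniteSums

theorem bayesian_consistency_key_lemma_quantitative_general
    (ε₁ ε₂ ε₃ δ : ℝ) (hε₃ : 0 < ε₃)
    (hδlt : δ < min ε₁ ε₂)
    (U : Type) [Fintype U] (p q r s : U → ℝ)
    (hq1 : (∑ u, q u) = 1)
    (hs1 : (∑ u, s u) = 1)
    (hpq : ε₁ ≤ (∑ u, |p u - q u|))
    (hpε₂ : ∀ u, ε₂ ≤ p u) (hqε₃ : ∀ u, ε₃ ≤ q u)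
    (hpr : (∑ u, |p u - r u|) < δ) (hps : (∑ u, |p u - s u|) < δ) :
    (1 / 2) * (ε₁ - δ) ^ 2 - 2 * δ * (|Real.log (ε₂ - δ)| + |Real.log ε₃|)
      ≤ ∑ u, r u * Real.log (s u / q u) := by
  have hδε₁ : δ < ε₁ := hδlt.trans_le (min_le_left _ _)
  have hδε₂ : δ < ε₂ := hδlt.trans_le (min_le_right _ _)
  have hs_lower : ∀ u, ε₂ - δ ≤ s u := fun u ↦ by
    linarith [hpε₂ u, le_abs_self (p u - s u), abs_sub_le_sum_abs_sub p s u]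
  have hs_pos : ∀ u, 0 < s u := fun u ↦ by linarith [hs_lower u]
  have hq_pos : ∀ u, 0 < q u := fun u ↦ hε₃.trans_le (hqε₃ u)
  have hlog : ∀ u, |log (s u / q u)| ≤ |log (ε₂ - δ)| + |log ε₃| := fun u ↦
    abs_log_div_le (by linarith) hε₃ (hs_lower u)
      (le_one_of_sum_eq_one (fun v ↦ (hs_pos v).le) hs1 u) (hqε₃ u)
      (le_one_of_sum_eq_one (fun v ↦ (hq_pos v).le) hq1 u)
  have hsq : ε₁ - δ ≤ ∑ u, |s u - q u| := by linarith [sum_abs_sub_le_add p s q]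
  have hrs : ∑ u, |r u - s u| ≤ 2 * δ := by
    linarith [sum_abs_sub_le_add r p s, sum_abs_sub_comm r p]
  have hpinsker := sq_sum_abs_sub_le_two_mul_sum_mul_log_div (fun u ↦ (hs_pos u).le) hq_pos hs1 hq1
  have hsq2 : (ε₁ - δ) ^ 2 ≤ (∑ u, |s u - q u|) ^ 2 := pow_le_pow_left₀ (by linarith) hsq 2
  have herr := abs_sum_mul_sub_sum_mul_le (a := r) (b := s) hlog
  have hM : (∑ u, |r u - s u|) * (|log (ε₂ - δ)| + |log ε₃|)
      ≤ 2 * δ * (|log (ε₂ - δ)| + |log ε₃|) := by gcongr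
  linarith [neg_abs_le (∑ u, r u * log (s u / q u) - ∑ u, s u * log (s u / q u))]

/-- Quantitative form of Lemma 1: with `δ < min(ε₁, ε₂)` and
`f(δ) = (1/2)(ε₁ - δ)² - 2δ(|log(ε₂ - δ)| + |log ε₃|)`, the sum
`∑ u, r u * log (s u / q u)` is bounded below by `f(δ)`. -/
theorem bayesian_consistency_key_lemma_quantitative
    (ε₁ ε₂ ε₃ δ : ℝ) (hε₁ : 0 < ε₁) (hε₂ : 0 < ε₂) (hε₃ : 0 < ε₃)
    (hδ : 0 < δ) (hδlt : δ < min ε₁ ε₂)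
    (U : Type) [Fintype U] (p q r s : U → ℝ)
    (hp0 : ∀ u, 0 ≤ p u) (hp1 : (∑ u, p u) = 1)
    (hq0 : ∀ u, 0 ≤ q u) (hq1 : (∑ u, q u) = 1)
    (hr0 : ∀ u, 0 ≤ r u) (hr1 : (∑ u, r u) = 1)
    (hs0 : ∀ u, 0 ≤ s u) (hs1 : (∑ u, s u) = 1)
    (hpq : ε₁ ≤ (∑ u, |p u - q u|))
    (hpε₂ : ∀ u, ε₂ ≤ p u) (hqε₃ : ∀ u, ε₃ ≤ q u)
    (hpr : (∑ u, |p u - r u|) < δ) (hps : (∑ u, |p u - s u|) < δ) :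
    (1 / 2) * (ε₁ - δ) ^ 2 - 2 * δ * (|Real.log (ε₂ - δ)| + |Real.log ε₃|)
      ≤ ∑ u, r u * Real.log (s u / q u) :=
  bayesian_consistency_key_lemma_quantitative_general ε₁ ε₂ ε₃ δ hε₃ hδlt U p q r s hq1 hs1 hpq hpε₂
    hqε₃ hpr hps
end

section
/- Statistical consistency of the MAP estimator: Let U be a finite set and A a finite set. For each a ∈ A, let Θ(a) be a nonempty open subset of a Euclidean space ℝ^{d_a}, let θ ↦ p_{(a,θ)} assign to each θ ∈ Θ(a) a probability distribution on U, let π be a probability distribution on A, and let f_a be a probability density on Θ(a). Assume for all a ∈ A: (C1) π(a) > 0; (C2) f_a is continuous, bounded, and strictly positive on Θ(a); (C3) θ ↦ p_{(a,θ)} is continuous on Θ(a) and p_{(a,θ)}(u) > 0 for all θ ∈ Θ(a) and u ∈ U; (C4) for all θ ∈ Θ(a) and all b ∈ A with b ≠ a, inf_{θ' ∈ Θ(b)} d(p_{(a,θ)}, p_{(b,θ')}) > 0. For u = (u₁,…,u_k) ∈ U^k and b ∈ A, let m_b(u) := π(b) · ∫_{Θ(b)} ∏_{j=1}^k p_{(b,θ')}(u_j)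 · f_b(θ') dθ' (the posterior score of b). Let P(a, θ, k) be the probability, under k i.i.d. draws u from p_{(a,θ)}, that m_a(u) > m_b(u) for every b ≠ a (i.e. the MAP estimator uniquely and correctly selects a). Then for every a ∈ A and every θ ∈ Θ(a), lim_{k → ∞} P(a, θ, k) = 1. -/
/-!
Write `ŝ` for the empirical distribution of a sample `u ∈ U^k` and `T = ∑ ŝ log ŝ`, so that the
likelihood of `u` under `r` is `exp (k ∑ ŝ log r)`. By Chebyshev's inequality `ŝ → p_{(a,θ)}` in
probability, so it suffices to show that, for `k` large, MAP is correct on every sample whose `ŝ`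
is close to `p_{(a,θ)}`. For such samples, identifiability (C4) and Pinsker's inequality bound
every likelihood under `b ≠ a` by `exp (k (T - ε²/16))`, so `m_b ≤ π b exp (k (T - ε²/16))`.
By continuity of the Kullback–Leibler divergence at `(p_{(a,θ)}, p_{(a,θ)})`, of `p_{(a,·)}` and
of `f_a`, there is an open `B ∋ θ` on which the likelihood is at least `exp (k (T - ε²/32))` and
`f_a ≥ f_a θ / 2`, so `m_a ≥ π a (f_a θ / 2) vol B exp (k (T - ε²/32))`. The ratio of the two
bounds grows like `exp (k ε²/32)`.
-/

namespace MapConsistency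

open Finset Filter Topology Real MeasureTheory
open scoped ENNReal

section Sampling

variable {U : Type*} [Fintype U] {q : U → ℝ} {k : ℕ}

def iidProb (q : U → ℝ) (k : ℕ) (E : (Fin k → U) → Prop) [DecidablePred E] : ℝ :=
  ∑ u : Fin k → U, if E u then ∏ j, q (u j) else 0

theorem sum_prod_eq_one (hq : ∑ x, q x = 1) (k : ℕ) : ∑ u : Fin k → U, ∏ j, q (u j) = 1 := by
  rw [← Fintype.prod_sum fun (_ : Fin k) => q]
  simp [hq]

theorem sum_fin_succ_pi {M : Type*} [AddCommMonoid M] {n : ℕ} (F : (Fin (n + 1) → U) → M) :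
    ∑ u, F u = ∑ x, ∑ w : Fin n → U, F (Fin.cons x w) := by
  rw [← Fintype.sum_prod_type']
  exact (Fintype.sum_equiv (Fin.consEquiv fun _ => U) _ _ fun _ => rfl).symm

theorem sum_prod_mul_sq_sum_eq {c : U → ℝ} (hq : ∑ x, q x = 1) (hc : ∑ x, q x * c x = 0) (k : ℕ) :
    ∑ u : Fin k → U, (∏ j, q (u j)) * (∑ j, c (u j)) ^ 2 = k * ∑ x, q x * c x ^ 2 := by
  induction k with
  | zero => simp
  | succ n ih =>
    have hsplit : ∀ x (w : Fin n → U),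
        (∏ j, q ((Fin.cons x w : Fin (n + 1) → U) j))
            * (∑ j, c ((Fin.cons x w : Fin (n + 1) → U) j)) ^ 2
          = q x * c x ^ 2 * ∏ j, q (w j) + 2 * (q x * c x) * ((∏ j, q (w j)) * ∑ j, c (w j))
            + q x * ((∏ j, q (w j)) * (∑ j, c (w j)) ^ 2) := by
      intro x w
      simp only [Fin.prod_univ_succ, Fin.sum_univ_succ, Fin.cons_zero, Fin.cons_succ]
      ring
    simp only [sum_fin_succ_pi, hsplit, sum_add_distrib, ← mul_sum, ← sum_mul,
      sum_prod_eq_one hq, ih, hc, hq]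
    push_cast
    ring

theorem iidProb_nonneg (hq : ∀ x, 0 ≤ q x) (E : (Fin k → U) → Prop) [DecidablePred E] :
    0 ≤ iidProb q k E :=
  sum_nonneg fun u _ => ite_nonneg (prod_nonneg fun j _ => hq (u j)) le_rfl

theorem iidProb_mono (hq : ∀ x, 0 ≤ q x) {E F : (Fin k → U) → Prop} [DecidablePred E]
    [DecidablePred F] (h : ∀ u, E u → F u) : iidProb q k E ≤ iidProb q k F := by
  refine sum_le_sum fun u _ => ?_
  have hw := prod_nonneg fun j (_ : j ∈ univ) => hq (u j)
  by_cases hE : E u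
  · simp [hE, h u hE]
  · simp only [hE, if_false]
    exact ite_nonneg hw le_rfl

theorem iidProb_add_iidProb_not (hq : ∑ x, q x = 1) (E : (Fin k → U) → Prop) [DecidablePred E] :
    iidProb q k E + iidProb q k (fun u => ¬ E u) = 1 := by
  rw [iidProb, iidProb, ← sum_add_distrib, ← sum_prod_eq_one hq k]
  refine sum_congr rfl fun u _ => ?_
  by_cases hE : E u <;> simp [hE]

theorem iidProb_le_one (hq0 : ∀ x, 0 ≤ q x) (hq1 : ∑ x, q x = 1) (E : (Fin k → U) → Prop)
    [DecidablePred E] : iidProb q k E ≤ 1 := by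
  calc iidProb q k E ≤ iidProb q k fun _ => True := iidProb_mono hq0 fun _ _ => trivial
    _ = 1 := by simp [iidProb, sum_prod_eq_one hq1]

theorem iidProb_lt_le (hq : ∀ x, 0 ≤ q x) {Y : (Fin k → U) → ℝ} (hY : ∀ u, 0 ≤ Y u) {t : ℝ}
    (ht : 0 < t) : iidProb q k (fun u => t < Y u) ≤ (∑ u, (∏ j, q (u j)) * Y u) / t := by
  rw [iidProb, sum_div]
  refine sum_le_sum fun u _ => ?_
  have hw := prod_nonneg fun j (_ : j ∈ univ) => hq (u j)
  split_ifs with h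
  · rw [le_div_iff₀ ht]; exact mul_le_mul_of_nonneg_left h.le hw
  · exact div_nonneg (mul_nonneg hw (hY u)) ht.le

end Sampling

section Empirical

variable {U : Type*} [DecidableEq U] {q : U → ℝ} {k : ℕ}

noncomputable def empirical (u : Fin k → U) (v : U) : ℝ := (#{j | u j = v} : ℝ) / k

theorem empirical_nonneg (u : Fin k → U) (v : U) : 0 ≤ empirical u v := by
  unfold empirical; positivity

theorem natCast_card_sub_mul_eq_sum (u : Fin k → U) (v : U) :
    (#{j | u j = v} : ℝ) - k * q v = ∑ j, ((if u j = v then 1 else 0) - q v) := by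
  rw [natCast_card_filter, sum_sub_distrib, sum_const, card_univ, Fintype.card_fin, nsmul_eq_mul]

variable [Fintype U]

theorem sum_empirical (hk : k ≠ 0) (u : Fin k → U) : ∑ v, empirical u v = 1 := by
  have hcard := card_eq_sum_card_fiberwise (s := univ) (t := univ) (f := u) fun _ _ => mem_univ _
  simp only [empirical, ← sum_div, ← Nat.cast_sum, ← hcard, card_univ, Fintype.card_fin]
  field_simp

theorem prod_eq_exp_mul_sum_empirical_mul_log {r : U → ℝ} (hr : ∀ v, 0 < r v) (u : Fin k → U) :
    ∏ j, r (u j) = exp (k * ∑ v, empirical u v * log (r v)) := by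
  rcases eq_or_ne k 0 with rfl | hk
  · simp
  have hfib : ∑ j, log (r (u j)) = ∑ v, (#{j | u j = v} : ℝ) * log (r v) := by
    rw [← sum_fiberwise_of_maps_to (s := univ) (t := univ) (g := u) fun _ _ => mem_univ _]
    refine sum_congr rfl fun v _ => ?_
    rw [sum_congr rfl fun j hj => by rw [(mem_filter.1 hj).2], sum_const, nsmul_eq_mul]
  rw [← exp_log (prod_pos fun j _ => hr (u j)), log_prod fun j _ => (hr (u j)).ne', hfib, mul_sum]
  congr 1
  refine sum_congr rfl fun v _ => ?_
  rw [empirical]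
  field_simp

theorem sum_mul_sq_indicator_sub_eq (hq : ∑ x, q x = 1) (v : U) :
    ∑ x, q x * ((if x = v then 1 else 0) - q v) ^ 2 = q v - q v ^ 2 := by
  have h : ∀ x, q x * ((if x = v then 1 else 0) - q v) ^ 2
      = (if x = v then q v * (1 - 2 * q v) else 0) + q v ^ 2 * q x := by
    intro x; split_ifs with hx
    · subst hx; ring
    · ring
  simp only [h, sum_add_distrib, sum_ite_eq', mem_univ, if_true, ← mul_sum, hq]
  ring

theorem iidProb_not_forall_abs_empirical_sub_le_le (hq0 : ∀ x, 0 ≤ q x) (hq1 : ∑ x, q x = 1)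
    (hk : k ≠ 0) {η : ℝ} (hη : 0 < η) :
    iidProb q k (fun u => ¬ ∀ v, |empirical u v - q v| ≤ η) ≤ 1 / η ^ 2 / k := by
  have hk' : (0 : ℝ) < k := by positivity
  set Y : (Fin k → U) → ℝ := fun u => ∑ v, ((#{j | u j = v} : ℝ) - k * q v) ^ 2
  have hbad : ∀ u : Fin k → U, (¬ ∀ v, |empirical u v - q v| ≤ η) → (k * η) ^ 2 < Y u := by
    intro u hu
    obtain ⟨v, hv⟩ := not_forall.1 hu
    rw [not_le] at hv
    have hv' : k * η < |(#{j | u j = v} : ℝ) - k * q v| := by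
      rwa [empirical, div_sub' hk'.ne', abs_div, abs_of_pos hk', lt_div_iff₀ hk', mul_comm] at hv
    calc (k * η) ^ 2 < ((#{j | u j = v} : ℝ) - k * q v) ^ 2 := by
          rw [← sq_abs (_ - _)]; gcongr
      _ ≤ Y u := single_le_sum (f := fun v => ((#{j | u j = v} : ℝ) - k * q v) ^ 2)
          (fun _ _ => sq_nonneg _) (mem_univ v)
  have hmoment : ∑ u, (∏ j, q (u j)) * Y u ≤ k := by
    calc ∑ u, (∏ j, q (u j)) * Y u = ∑ v, k * (q v - q v ^ 2) := by
          simp only [Y, mul_sum]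
          rw [sum_comm]
          refine sum_congr rfl fun v _ => ?_
          have hc : ∑ x, q x * ((if x = v then 1 else 0) - q v) = 0 := by
            simp [mul_sub, ← sum_mul, hq1]
          simp only [natCast_card_sub_mul_eq_sum]
          rw [sum_prod_mul_sq_sum_eq hq1 hc, sum_mul_sq_indicator_sub_eq hq1]
      _ ≤ ∑ v, k * q v :=
          sum_le_sum fun v _ => mul_le_mul_of_nonneg_left (by nlinarith [sq_nonneg (q v)]) hk'.le
      _ = k := by rw [← mul_sum, hq1, mul_one]
  calc iidProb q k (fun u => ¬ ∀ v, |empirical u v - q v| ≤ η)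
      ≤ iidProb q k (fun u => (k * η) ^ 2 < Y u) := iidProb_mono hq0 hbad
    _ ≤ (∑ u, (∏ j, q (u j)) * Y u) / (k * η) ^ 2 :=
        iidProb_lt_le hq0 (fun _ => sum_nonneg fun _ _ => sq_nonneg _) (by positivity)
    _ ≤ k / (k * η) ^ 2 := by gcongr
    _ = 1 / η ^ 2 / k := by field_simp

theorem tendsto_iidProb_of_eventually_empirical (hq0 : ∀ x, 0 ≤ q x) (hq1 : ∑ x, q x = 1)
    {P : (U → ℝ) → Prop} (hP : ∀ᶠ s in 𝓝 q, P s) {E : ∀ k, (Fin k → U) → Prop}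
    [∀ k, DecidablePred (E k)] (hE : ∀ᶠ k in atTop, ∀ u : Fin k → U, P (empirical u) → E k u) :
    Tendsto (fun k => iidProb q k (E k)) atTop (𝓝 1) := by
  obtain ⟨η, hη, hball⟩ := Metric.eventually_nhds_iff.1 hP
  have hη' : 0 < η / 2 := half_pos hη
  have hclose : ∀ᶠ k in atTop, ∀ u : Fin k → U, (∀ v, |empirical u v - q v| ≤ η / 2) → E k u := by
    filter_upwards [hE] with k hk u hu
    refine hk u (hball (((dist_pi_le_iff hη'.le).2 fun v => ?_).trans_lt (half_lt_self hη)))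
    rw [Real.dist_eq]; exact hu v
  have hfar : Tendsto (fun k => iidProb q k fun u => ¬ ∀ v, |empirical u v - q v| ≤ η / 2)
      atTop (𝓝 0) :=
    squeeze_zero' (Eventually.of_forall fun k => iidProb_nonneg hq0 _)
      ((eventually_ne_atTop 0).mono fun k hk =>
        iidProb_not_forall_abs_empirical_sub_le_le hq0 hq1 hk hη')
      (tendsto_const_div_atTop_nhds_zero_nat _)
  have hnear : Tendsto (fun k => iidProb q k fun u => ∀ v, |empirical u v - q v| ≤ η / 2)
      atTop (𝓝 1) := by
    have h := (tendsto_const_nhds (x := (1 : ℝ))).sub hfar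
    rw [sub_zero] at h
    exact h.congr fun k => (eq_sub_of_add_eq (iidProb_add_iidProb_not hq1 _)).symm
  exact tendsto_of_tendsto_of_tendsto_of_le_of_le' hnear tendsto_const_nhds
    (hclose.mono fun k hk => iidProb_mono hq0 hk)
    (Eventually.of_forall fun k => iidProb_le_one hq0 hq1 _)

end Empirical

section Divergence

variable {U : Type*} [Fintype U]

theorem mul_log_sub_mul_log_le {s r : ℝ} (hs : 0 ≤ s) (hr : 0 < r) :
    s * log r - s * log s ≤ 2 * (√s * √r - s) := by
  rcases hs.eq_or_lt with rfl | hs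
  · simp
  have hlog : log r - log s = 2 * log (√r / √s) := by
    rw [log_div (sqrt_pos.2 hr).ne' (sqrt_pos.2 hs).ne', log_sqrt hr.le, log_sqrt hs.le]; ring
  calc s * log r - s * log s = s * (2 * log (√r / √s)) := by rw [← hlog, mul_sub]
    _ ≤ s * (2 * (√r / √s - 1)) := by
        gcongr; exact log_le_sub_one_of_pos (div_pos (sqrt_pos.2 hr) (sqrt_pos.2 hs))
    _ = 2 * (s / √s * √r - s) := by ring
    _ = 2 * (√s * √r - s) := by rw [div_sqrt]

-- Pinsker's inequality with constant `1/4`, through the squared Hellinger distance `H`.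
theorem sum_mul_log_add_sq_sum_abs_sub_div_four_le {s r : U → ℝ} (hs0 : ∀ v, 0 ≤ s v)
    (hs1 : ∑ v, s v = 1) (hr0 : ∀ v, 0 < r v) (hr1 : ∑ v, r v = 1) :
    ∑ v, s v * log (r v) + (∑ v, |s v - r v|) ^ 2 / 4 ≤ ∑ v, s v * log (s v) := by
  set H := ∑ v, (√(s v) - √(r v)) ^ 2
  have hsq : ∀ v, √(s v) ^ 2 = s v := fun v => sq_sqrt (hs0 v)
  have hrq : ∀ v, √(r v) ^ 2 = r v := fun v => sq_sqrt (hr0 v).le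
  have hH : H = 2 - 2 * ∑ v, √(s v) * √(r v) := by
    simp only [H, sub_sq, hsq, hrq, sum_add_distrib, sum_sub_distrib, hs1, hr1, mul_assoc,
      ← mul_sum]
    ring
  have hgibbs : ∑ v, s v * log (r v) - ∑ v, s v * log (s v) ≤ -H := by
    calc ∑ v, s v * log (r v) - ∑ v, s v * log (s v)
        ≤ ∑ v, 2 * (√(s v) * √(r v) - s v) := by
          rw [← sum_sub_distrib]; exact sum_le_sum fun v _ => mul_log_sub_mul_log_le (hs0 v) (hr0 v)
      _ = -H := by rw [← mul_sum, sum_sub_distrib, hs1, hH]; ring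
  have hcs : (∑ v, |s v - r v|) ^ 2 ≤ 4 * H := by
    have habs : ∀ v, |s v - r v| = |√(s v) - √(r v)| * (√(s v) + √(r v)) := by
      intro v
      have h : s v - r v = (√(s v) + √(r v)) * (√(s v) - √(r v)) := by
        rw [← sq_sub_sq, hsq, hrq]
      rw [h, abs_mul, abs_of_nonneg (by positivity : 0 ≤ √(s v) + √(r v)), mul_comm]
    calc (∑ v, |s v - r v|) ^ 2
        ≤ (∑ v, |√(s v) - √(r v)| ^ 2) * ∑ v, (√(s v) + √(r v)) ^ 2 := by
          simp only [habs]; exact sum_mul_sq_le_sq_mul_sq _ _ _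
      _ ≤ H * ∑ v, 2 * (s v + r v) := by
          simp only [sq_abs]
          gcongr with v
          nlinarith [sq_nonneg (√(s v) - √(r v)), hsq v, hrq v]
      _ = 4 * H := by rw [← mul_sum, sum_add_distrib, hs1, hr1]; ring
  linarith

theorem exists_mem_nhds_sum_mul_log_sub_lt {q : U → ℝ} (hq : ∀ v, 0 < q v) {γ : ℝ} (hγ : 0 < γ) :
    ∃ t ∈ 𝓝 q, ∀ s ∈ t, ∀ r ∈ t, ∑ v, s v * log (s v) - γ < ∑ v, s v * log (r v) := by
  have hterm : ∀ v, Tendsto (fun x : (U → ℝ) × (U → ℝ) => x.1 v * log (x.1 v) - x.1 v * log (x.2 v))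
      (𝓝 q ×ˢ 𝓝 q) (𝓝 0) := by
    intro v
    have h1 : Continuous fun x : (U → ℝ) × (U → ℝ) => x.1 v * log (x.1 v) :=
      continuous_mul_log.comp (by fun_prop)
    have h2 : ContinuousAt (fun x : (U → ℝ) × (U → ℝ) => x.1 v * log (x.2 v)) (q, q) := by
      fun_prop (disch := exact (hq v).ne')
    rw [← nhds_prod_eq]
    simpa using h1.continuousAt.tendsto.sub h2.tendsto
  have hlim := tendsto_finsetSum univ fun v _ => hterm v
  rw [sum_const_zero] at hlim
  obtain ⟨t, ht, hlt⟩ := eventually_prod_self_iff'.1 (hlim.eventually_lt_const hγ)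
  refine ⟨t, ht, fun s hs r hr => ?_⟩
  have := hlt s hs r hr
  rw [sum_sub_distrib] at this
  linarith

theorem eventually_half_le_sum_abs_sub (q : U → ℝ) {ε : ℝ} (hε : 0 < ε) :
    ∀ᶠ s in 𝓝 q, ∀ r : U → ℝ, ε ≤ ∑ v, |q v - r v| → ε / 2 ≤ ∑ v, |s v - r v| := by
  have hcont : Tendsto (fun s : U → ℝ => ∑ v, |s v - q v|) (𝓝 q) (𝓝 0) := by
    have : Continuous fun s : U → ℝ => ∑ v, |s v - q v| := by fun_prop
    simpa using this.tendsto q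
  filter_upwards [hcont.eventually_lt_const (half_pos hε)] with s hs r hr
  have htri := sum_le_sum fun v (_ : v ∈ univ) => abs_sub_le (q v) (s v) (r v)
  simp only [sum_add_distrib, abs_sub_comm (q _) (s _)] at htri
  linarith

end Divergence

theorem exists_pos_forall_le_of_forall_pos_sInf {ι : Type*} [Finite ι] {P : ι → Prop}
    {S : ι → Set ℝ} (hS : ∀ i, BddBelow (S i)) (h : ∀ i, P i → 0 < sInf (S i)) :
    ∃ ε > 0, ∀ i, P i → ∀ x ∈ S i, ε ≤ x := by
  have hsmall : ∀ᶠ ε in 𝓝[>] (0 : ℝ), ∀ i, P i → ε < sInf (S i) :=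
    eventually_all.2 fun i => eventually_imp_distrib_left.2 fun hi =>
      nhdsWithin_le_nhds (eventually_lt_nhds (h i hi))
  obtain ⟨ε, hε, hεpos⟩ := (hsmall.and self_mem_nhdsWithin).exists
  exact ⟨ε, hεpos, fun i hi x hx => (hε i hi).le.trans (csInf_le (hS i) hx)⟩

theorem exists_isOpen_measureReal_pos_of_eventually {X : Type*} [TopologicalSpace X]
    [MeasurableSpace X] {μ : Measure X} [μ.IsOpenPosMeasure] [IsLocallyFiniteMeasure μ]
    {P : X → Prop} {x : X} (h : ∀ᶠ y in 𝓝 x, P y) :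
    ∃ B, IsOpen B ∧ 0 < μ.real B ∧ μ B ≠ ∞ ∧ ∀ y ∈ B, P y := by
  obtain ⟨s, hs, hμs⟩ := μ.finiteAt_nhds x
  obtain ⟨B, hBsub, hBo, hxB⟩ := mem_nhds_iff.1 (h.and hs)
  have hμB : μ B ≠ ∞ := ((measure_mono fun y hy => (hBsub hy).2).trans_lt hμs).ne
  exact ⟨B, hBo, ENNReal.toReal_pos (hBo.measure_ne_zero μ ⟨x, hxB⟩) hμB, hμB,
    fun y hy => (hBsub hy).1⟩

theorem eventually_forall_mul_exp_lt {ι : Type*} [Finite ι] (c : ι → ℝ) {C γ₁ γ₂ : ℝ}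
    (hC : 0 < C) (hγ : γ₁ < γ₂) :
    ∀ᶠ k : ℕ in atTop, ∀ i T, c i * exp (k * (T - γ₂)) < C * exp (k * (T - γ₁)) := by
  have hgrow : Tendsto (fun k : ℕ => C * exp (k * (γ₂ - γ₁))) atTop atTop :=
    (tendsto_exp_atTop.comp
      (tendsto_natCast_atTop_atTop.atTop_mul_const (sub_pos.2 hγ))).const_mul_atTop hC
  filter_upwards [eventually_all.2 fun i => hgrow.eventually_gt_atTop (c i)] with k hk i T
  calc c i * exp (k * (T - γ₂)) < C * exp (k * (γ₂ - γ₁)) * exp (k * (T - γ₂)) :=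
        mul_lt_mul_of_pos_right (hk i) (exp_pos _)
    _ = C * exp (k * (T - γ₁)) := by rw [mul_assoc, ← exp_add]; ring_nf

section Likelihood

variable {U : Type*} [Fintype U] {X : Type*} [MeasurableSpace X] {μ : Measure X} {S : Set X}
  {p : X → U → ℝ} {f : X → ℝ} {k : ℕ}

theorem integrableOn_prod_mul [TopologicalSpace X] [OpensMeasurableSpace X] (hS : MeasurableSet S)
    (hfi : IntegrableOn f S μ) (hp : ∀ v, ContinuousOn (fun x => p x v) S)
    (hp0 : ∀ x ∈ S, ∀ v, 0 ≤ p x v) (hp1 : ∀ x ∈ S, ∑ v, p x v = 1) (u : Fin k → U) :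
    IntegrableOn (fun x => (∏ j, p x (u j)) * f x) S μ := by
  refine hfi.bdd_mul (c := 1)
    ((continuousOn_finsetProd _ fun j _ => hp (u j)).aestronglyMeasurable hS)
    (ae_restrict_of_forall_mem hS fun x hx => ?_)
  rw [Real.norm_eq_abs, abs_of_nonneg (prod_nonneg fun j _ => hp0 x hx (u j))]
  exact prod_le_one (fun j _ => hp0 x hx (u j)) fun j _ =>
    (single_le_sum (fun v _ => hp0 x hx v) (mem_univ (u j))).trans (hp1 x hx).le

variable [DecidableEq U]

theorem prod_le_exp_sub_sq_sum_abs_sub {r : U → ℝ} (hr0 : ∀ v, 0 < r v) (hr1 : ∑ v, r v = 1)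
    (hk : k ≠ 0) (u : Fin k → U) :
    ∏ j, r (u j) ≤ exp (k * (∑ v, empirical u v * log (empirical u v)
      - (∑ v, |empirical u v - r v|) ^ 2 / 4)) := by
  rw [prod_eq_exp_mul_sum_empirical_mul_log hr0]
  gcongr
  linarith [sum_mul_log_add_sq_sum_abs_sub_div_four_le (empirical_nonneg u) (sum_empirical hk u)
    hr0 hr1]

theorem setIntegral_prod_mul_le (hS : MeasurableSet S) (hf0 : ∀ x ∈ S, 0 ≤ f x)
    (hf1 : ∫ x in S, f x ∂μ = 1) (hp0 : ∀ x ∈ S, ∀ v, 0 < p x v) (hp1 : ∀ x ∈ S, ∑ v, p x v = 1)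
    (hk : k ≠ 0) {u : Fin k → U} {ε : ℝ} (hε : 0 ≤ ε)
    (hsep : ∀ x ∈ S, ε ≤ ∑ v, |empirical u v - p x v|) :
    ∫ x in S, (∏ j, p x (u j)) * f x ∂μ
      ≤ exp (k * (∑ v, empirical u v * log (empirical u v) - ε ^ 2 / 4)) := by
  set M := exp (k * (∑ v, empirical u v * log (empirical u v) - ε ^ 2 / 4))
  have hfi : IntegrableOn f S μ := Integrable.of_integral_ne_zero (by rw [hf1]; exact one_ne_zero)
  calc ∫ x in S, (∏ j, p x (u j)) * f x ∂μ ≤ ∫ x in S, M * f x ∂μ := by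
        refine integral_mono_of_nonneg (ae_restrict_of_forall_mem hS fun x hx => ?_)
          (hfi.const_mul M) (ae_restrict_of_forall_mem hS fun x hx => ?_)
        · exact mul_nonneg (prod_nonneg fun j _ => (hp0 x hx (u j)).le) (hf0 x hx)
        · refine mul_le_mul_of_nonneg_right
            ((prod_le_exp_sub_sq_sum_abs_sub (hp0 x hx) (hp1 x hx) hk u).trans
              (exp_le_exp.2 (by gcongr; exact hsep x hx))) (hf0 x hx)
    _ = M := by rw [integral_const_mul, hf1, mul_one]

theorem le_setIntegral_prod_mul (hS : MeasurableSet S) {u : Fin k → U}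
    (hint : IntegrableOn (fun x => (∏ j, p x (u j)) * f x) S μ) (hf0 : ∀ x ∈ S, 0 ≤ f x)
    (hp0 : ∀ x ∈ S, ∀ v, 0 < p x v) {B : Set X} (hB : MeasurableSet B) (hBS : B ⊆ S)
    (hμB : μ B ≠ ∞) {c γ : ℝ} (hc : ∀ x ∈ B, c ≤ f x)
    (hγ : ∀ x ∈ B,
      ∑ v, empirical u v * log (empirical u v) - γ < ∑ v, empirical u v * log (p x v)) :
    c * exp (k * (∑ v, empirical u v * log (empirical u v) - γ)) * μ.real B
      ≤ ∫ x in S, (∏ j, p x (u j)) * f x ∂μ := by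
  calc _ ≤ ∫ x in B, (∏ j, p x (u j)) * f x ∂μ := by
        refine setIntegral_ge_of_const_le_real hB hμB (fun x hx => ?_) (hint.mono_set hBS)
        rw [prod_eq_exp_mul_sum_empirical_mul_log (hp0 x (hBS hx)), mul_comm _ (f x)]
        exact mul_le_mul (hc x hx) (exp_le_exp.2 (by gcongr; exact (hγ x hx).le)) (exp_pos _).le
          (hf0 x (hBS hx))
    _ ≤ ∫ x in S, (∏ j, p x (u j)) * f x ∂μ :=
        setIntegral_mono_set hint (ae_restrict_of_forall_mem hS fun x hx =>
          mul_nonneg (prod_nonneg fun j _ => (hp0 x hx (u j)).le) (hf0 x hx)) hBS.eventuallyLE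

theorem exists_mem_nhds_le_setIntegral_prod_mul [TopologicalSpace X] [OpensMeasurableSpace X]
    [μ.IsOpenPosMeasure] [IsLocallyFiniteMeasure μ] {θ : X} (hS : IsOpen S) (hθ : θ ∈ S)
    (hf : ContinuousOn f S) (hf0 : ∀ x ∈ S, 0 < f x) (hfi : IntegrableOn f S μ)
    (hp : ∀ v, ContinuousOn (fun x => p x v) S) (hp0 : ∀ x ∈ S, ∀ v, 0 < p x v)
    (hp1 : ∀ x ∈ S, ∑ v, p x v = 1) {γ : ℝ} (hγ : 0 < γ) :
    ∃ C > 0, ∃ t ∈ 𝓝 (p θ), ∀ k (u : Fin k → U), empirical u ∈ t →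
      C * exp (k * (∑ v, empirical u v * log (empirical u v) - γ))
        ≤ ∫ x in S, (∏ j, p x (u j)) * f x ∂μ := by
  obtain ⟨t, ht, hKL⟩ := exists_mem_nhds_sum_mul_log_sub_lt (hp0 θ hθ) hγ
  have hSθ : S ∈ 𝓝 θ := hS.mem_nhds hθ
  obtain ⟨B, hBo, hB, hμB, hBprop⟩ := exists_isOpen_measureReal_pos_of_eventually (μ := μ)
    (Eventually.and hSθ (((hf.continuousAt hSθ).eventually_const_lt (half_lt_self (hf0 θ hθ))).and
      ((continuousAt_pi.2 fun v => (hp v).continuousAt hSθ).preimage_mem_nhds ht)))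
  refine ⟨f θ / 2 * μ.real B, mul_pos (half_pos (hf0 θ hθ)) hB, t, ht, fun k u hu => ?_⟩
  calc _ = f θ / 2 * exp (k * (∑ v, empirical u v * log (empirical u v) - γ)) * μ.real B := by
        ring
    _ ≤ _ := le_setIntegral_prod_mul hS.measurableSet
        (integrableOn_prod_mul hS.measurableSet hfi hp (fun x hx v => (hp0 x hx v).le) hp1 u)
        (fun x hx => (hf0 x hx).le) hp0 hBo.measurableSet (fun y hy => (hBprop y hy).1) hμB
        (fun y hy => (hBprop y hy).2.1.le) fun y hy => hKL _ hu _ (hBprop y hy).2.2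

end Likelihood

end MapConsistency

open MapConsistency

open MeasureTheory Classical in
theorem map_estimator_statistically_consistent_general
    (U : Type) [Fintype U] (A : Type) [Fintype A]
    (d : A → ℕ) (Θ : ∀ a : A, Set (Fin (d a) → ℝ))
    (hΘ_open : ∀ a, IsOpen (Θ a))
    (p : ∀ a : A, (Fin (d a) → ℝ) → U → ℝ)
    (π : A → ℝ) (f : ∀ a : A, (Fin (d a) → ℝ) → ℝ)
    -- each `p_{(a,θ)}`, `θ ∈ Θ(a)`, is a probability distribution on `U`:
    (hp_dist : ∀ a, ∀ θ ∈ Θ a, (∀ u, 0 ≤ p a θ u) ∧ (∑ u, p a θ u) = 1)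
    -- each `f_a` is a probability density on `Θ(a)`:
    (hf_int : ∀ a, (∫ θ in Θ a, f a θ) = 1)
    -- (C1):
    (hC1 : ∀ a, 0 < π a)
    -- (C2): densities are continuous, bounded and strictly positive:
    (hC2_cont : ∀ a, ContinuousOn (f a) (Θ a))
    (hC2_pos : ∀ a, ∀ θ ∈ Θ a, 0 < f a θ)
    -- (C3): likelihoods are continuous and strictly positive:
    (hC3_cont : ∀ a, ∀ u : U, ContinuousOn (fun θ => p a θ u) (Θ a))
    (hC3_pos : ∀ a, ∀ θ ∈ Θ a, ∀ u, 0 < p a θ u)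
    -- (C4): identifiability:
    (hC4 : ∀ a, ∀ θ ∈ Θ a, ∀ b, b ≠ a →
      0 < sInf ((fun θ' => ∑ u, |p a θ u - p b θ' u|) '' Θ b)) :
    ∀ a : A, ∀ θ ∈ Θ a,
      Filter.Tendsto
        (fun k : ℕ =>
          ∑ u : Fin k → U,
            if ∀ b : A, b ≠ a →
                 π b * (∫ θ' in Θ b, (∏ j : Fin k, p b θ' (u j)) * f b θ')
                   < π a * (∫ θ'' in Θ a, (∏ j : Fin k, p a θ'' (u j)) * f a θ'')
            then ∏ j : Fin k, p a θ (u j) else 0)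
        Filter.atTop (nhds 1) := by
  intro a θ hθ
  obtain ⟨ε, hε, hsep⟩ := exists_pos_forall_le_of_forall_pos_sInf
    (fun b => ⟨0, by rintro _ ⟨θ', -, rfl⟩; positivity⟩) (hC4 a θ hθ)
  set γ := (ε / 2) ^ 2 / 4
  have hγ : 0 < γ := by positivity
  obtain ⟨C, hC, t, ht, hlower⟩ := exists_mem_nhds_le_setIntegral_prod_mul (μ := volume)
    (hΘ_open a) hθ (hC2_cont a) (hC2_pos a)
    (Integrable.of_integral_ne_zero (by rw [hf_int a]; exact one_ne_zero)) (hC3_cont a)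
    (hC3_pos a) (fun x hx => (hp_dist a x hx).2) (half_pos hγ)
  refine tendsto_iidProb_of_eventually_empirical (fun v => (hC3_pos a θ hθ v).le)
    (hp_dist a θ hθ).2 (Filter.Eventually.and ht (eventually_half_le_sum_abs_sub _ hε)) ?_
  filter_upwards [Filter.eventually_ne_atTop 0,
    eventually_forall_mul_exp_lt π (mul_pos (hC1 a) hC) (half_lt_self hγ)]
    with k hk hlarge u ⟨hut, husep⟩ b hb
  set T := ∑ v, empirical u v * Real.log (empirical u v)
  calc π b * ∫ θ' in Θ b, (∏ j, p b θ' (u j)) * f b θ'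
      ≤ π b * Real.exp (k * (T - γ)) :=
        mul_le_mul_of_nonneg_left (setIntegral_prod_mul_le (hΘ_open b).measurableSet
          (fun x hx => (hC2_pos b x hx).le) (hf_int b) (hC3_pos b) (fun x hx => (hp_dist b x hx).2)
          hk (half_pos hε).le fun x hx => husep _ (hsep b hb _ ⟨x, hx, rfl⟩)) (hC1 b).le
    _ < π a * C * Real.exp (k * (T - γ / 2)) := hlarge b T
    _ ≤ π a * ∫ θ'' in Θ a, (∏ j, p a θ'' (u j)) * f a θ'' := by
        rw [mul_assoc]; exact mul_le_mul_of_nonneg_left (hlower k u hut) (hC1 a).le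

open MeasureTheory Classical in
/-- Theorem 1 of the paper: statistical consistency of the MAP estimator.
Under conditions (C1)–(C4), for every `a ∈ A` and `θ ∈ Θ(a)`, the probability
(under `k` i.i.d. draws from `p_{(a,θ)}`) that the posterior score
`m_b(u) = π(b) · ∫_{Θ(b)} ∏_j p_{(b,θ')}(u_j) · f_b(θ') dθ'` is uniquely maximized at `a`
converges to `1` as `k → ∞`.  The probability of an event `E ⊆ U^k` under the product
measure is `∑_{u ∈ E} ∏ j, p_{(a,θ)} (u j)`. -/
theorem map_estimator_statistically_consistent
    (U : Type) [Fintype U] (A : Type) [Fintype A]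
    (d : A → ℕ) (Θ : ∀ a : A, Set (Fin (d a) → ℝ))
    (hΘ_open : ∀ a, IsOpen (Θ a)) (hΘ_ne : ∀ a, (Θ a).Nonempty)
    (p : ∀ a : A, (Fin (d a) → ℝ) → U → ℝ)
    (π : A → ℝ) (f : ∀ a : A, (Fin (d a) → ℝ) → ℝ)
    -- `π` is a probability distribution on `A`:
    (hπ0 : ∀ a, 0 ≤ π a) (hπ1 : (∑ a, π a) = 1)
    -- each `p_{(a,θ)}`, `θ ∈ Θ(a)`, is a probability distribution on `U`:
    (hp_dist : ∀ a, ∀ θ ∈ Θ a, (∀ u, 0 ≤ p a θ u) ∧ (∑ u, p a θ u) = 1)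
    -- each `f_a` is a probability density on `Θ(a)`:
    (hf_nonneg : ∀ a, ∀ θ ∈ Θ a, 0 ≤ f a θ)
    (hf_int : ∀ a, (∫ θ in Θ a, f a θ) = 1)
    -- (C1):
    (hC1 : ∀ a, 0 < π a)
    -- (C2): densities are continuous, bounded and strictly positive:
    (hC2_cont : ∀ a, ContinuousOn (f a) (Θ a))
    (hC2_bdd : ∀ a, ∃ C : ℝ, ∀ θ ∈ Θ a, f a θ ≤ C)
    (hC2_pos : ∀ a, ∀ θ ∈ Θ a, 0 < f a θ)
    -- (C3): likelihoods are continuous and strictly positive: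
    (hC3_cont : ∀ a, ∀ u : U, ContinuousOn (fun θ => p a θ u) (Θ a))
    (hC3_pos : ∀ a, ∀ θ ∈ Θ a, ∀ u, 0 < p a θ u)
    -- (C4): identifiability:
    (hC4 : ∀ a, ∀ θ ∈ Θ a, ∀ b, b ≠ a →
      0 < sInf ((fun θ' => ∑ u, |p a θ u - p b θ' u|) '' Θ b)) :
    ∀ a : A, ∀ θ ∈ Θ a,
      Filter.Tendsto
        (fun k : ℕ =>
          ∑ u : Fin k → U,
            if ∀ b : A, b ≠ a →
                 π b * (∫ θ' in Θ b, (∏ j : Fin k, p b θ' (u j)) * f b θ')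
                   < π a * (∫ θ'' in Θ a, (∏ j : Fin k, p a θ'' (u j)) * f a θ'')
            then ∏ j : Fin k, p a θ (u j) else 0)
        Filter.atTop (nhds 1) :=
  map_estimator_statistically_consistent_general U A d Θ hΘ_open p π f hp_dist hf_int hC1 hC2_cont
    hC2_pos hC3_cont hC3_pos hC4
end
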